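/- arXiv:2503.16902 — 8 statements merged into one kernel-verified Lean document; each statement's English description precedes it below -/
import Mathlib

section
/- Let f : ℝ^n → ℝ be continuous, M ⊆ ℝ^n, and let K : ℝ^n → Set ℝ^m be a set-valued mapping whose graph gph K = {(z, λ) | λ ∈ K z} is closed. Let z̄ ∈ M ∩ dom K and assume that K is inner semicompact at z̄ with respect to dom K: for every sequence (z_k) in dom K with z_k → z̄ there exist λ_k ∈ K z_k, k ∈ ℕ, such that (λ_k) possesses a bounded subsequence. If for every λ̄ ∈ K z̄ the pair (z̄, λ̄) is a local minimizer of (z, λ) ↦ f z on {(z, λ) | z ∈ M ∧ λ ∈ K z}, then z̄ is a local minimizer of f on M ∩ dom K. -/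
open Filter Metric Set Bornology
open scoped RealInnerProductSpace Topology Pointwise

noncomputable section

/-- The Bouligand tangent cone to `Ω` at `x`: `w` belongs to it iff there are `t k ↓ 0`
(positive) and `v k → w` with `x + t k • v k ∈ Ω` for all `k`. -/
def bouligandTangentCone {E : Type*} [NormedAddCommGroup E] [NormedSpace ℝ E]
    (Ω : Set E) (x : E) : Set E :=
  {w | ∃ (t : ℕ → ℝ) (v : ℕ → E), (∀ k, 0 < t k) ∧
    Tendsto t atTop (𝓝 0) ∧ Tendsto v atTop (𝓝 w) ∧ ∀ k, x + t k • v k ∈ Ω}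

/-- The regular (Fréchet) normal cone, defined as the polar of the Bouligand tangent cone. -/
def regNormalCone {E : Type*} [NormedAddCommGroup E] [InnerProductSpace ℝ E]
    (Ω : Set E) (x : E) : Set E :=
  {ζ | ∀ w ∈ bouligandTangentCone Ω x, ⟪ζ, w⟫ ≤ 0}

/-- The regular (Fréchet) normal cone for subsets of a product of inner product spaces,
using the natural pairing on the product. -/
def regNormalConeProd {E F : Type*} [NormedAddCommGroup E] [InnerProductSpace ℝ E]
    [NormedAddCommGroup F] [InnerProductSpace ℝ F]
    (Ω : Set (E × F)) (p : E × F) : Set (E × F) :=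
  {ζ | ∀ q ∈ bouligandTangentCone Ω p, ⟪ζ.1, q.1⟫ + ⟪ζ.2, q.2⟫ ≤ 0}

/-- The domain of a set-valued mapping: the points with nonempty image. -/
def svDom {E F : Type*} (K : E → Set F) : Set E := {z | (K z).Nonempty}

/-- The graph of a set-valued mapping. -/
def svGraph {E F : Type*} (K : E → Set F) : Set (E × F) := {p | p.2 ∈ K p.1}

/-- `K` is inner semicompact at `zb` w.r.t. its domain: for every sequence in `dom K`
converging to `zb` there is a selection of images possessing a bounded subsequence. -/
def InnerSemicompactAt {E F : Type*} [TopologicalSpace E] [Bornology F]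
    (K : E → Set F) (zb : E) : Prop :=
  ∀ zs : ℕ → E, (∀ k, zs k ∈ svDom K) → Tendsto zs atTop (𝓝 zb) →
    ∃ ls : ℕ → F, (∀ k, ls k ∈ K (zs k)) ∧
      ∃ φ : ℕ → ℕ, StrictMono φ ∧ IsBounded (Set.range (ls ∘ φ))

/-- `K` is inner calm* in the fuzzy sense at `zb` w.r.t. its domain. -/
def InnerCalmStarFuzzyAt {E F : Type*} [NormedAddCommGroup E] [NormedSpace ℝ E]
    [NormedAddCommGroup F] (K : E → Set F) (zb : E) : Prop :=
  ∀ d ∈ bouligandTangentCone (svDom K) zb, ‖d‖ = 1 →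
    ∃ κ > (0 : ℝ), ∃ lb : F, ∃ (t : ℕ → ℝ) (ds : ℕ → E) (ls : ℕ → F),
      (∀ k, 0 < t k) ∧ Tendsto t atTop (𝓝 0) ∧ Tendsto ds atTop (𝓝 d) ∧
      Tendsto ls atTop (𝓝 lb) ∧
      ∀ k, ls k ∈ K (zb + t k • ds k) ∧ ‖ls k - lb‖ ≤ κ * t k * ‖ds k‖

/-! Suppose `zb` is not a local minimizer on `M ∩ dom K`: then some `z_k → zb` in `M ∩ dom K`
has `f z_k < f zb`. Inner semicompactness yields `λ_k ∈ K z_k` with a bounded, hence (in a proper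
space) convergent, subsequence; closedness of `gph K` puts its limit `λ` in `K zb`, and the points
`(z_k, λ_k)` of that subsequence eventually violate local minimality of `(zb, λ)`. -/

theorem exists_seq_tendsto_lt_of_not_isLocalMinOn {E β : Type*} [TopologicalSpace E]
    [FirstCountableTopology E] [LinearOrder β] {f : E → β} {s : Set E} {a : E}
    (h : ¬ IsLocalMinOn f s a) :
    ∃ zs : ℕ → E, Tendsto zs atTop (𝓝 a) ∧ ∀ k, zs k ∈ s ∧ f (zs k) < f a := by
  rw [IsLocalMinOn, IsMinFilter, not_eventually] at h
  have hfreq : ∃ᶠ z in 𝓝[s] a, z ∈ s ∧ f z < f a :=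
    (h.and_eventually self_mem_nhdsWithin).mono fun z hz => ⟨hz.2, not_le.1 hz.1⟩
  obtain ⟨zs, hlim, hzs⟩ := frequently_iff_seq_forall.1 hfreq
  exact ⟨zs, hlim.mono_right nhdsWithin_le_nhds, hzs⟩

theorem InnerSemicompactAt.exists_subseq_tendsto_mem_graph {E F : Type*} [TopologicalSpace E]
    [PseudoMetricSpace F] [ProperSpace F] {K : E → Set F} {zb : E}
    (hisc : InnerSemicompactAt K zb) (hgph : IsClosed (svGraph K)) {zs : ℕ → E}
    (hdom : ∀ k, zs k ∈ svDom K) (hlim : Tendsto zs atTop (𝓝 zb)) :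
    ∃ lamb ∈ K zb, ∃ (φ : ℕ → ℕ) (ls : ℕ → F), StrictMono φ ∧ (∀ k, ls k ∈ K (zs (φ k))) ∧
      Tendsto (fun k => (zs (φ k), ls k)) atTop (𝓝 (zb, lamb)) := by
  obtain ⟨ls, hls, φ, hφ, hbdd⟩ := hisc zs hdom hlim
  obtain ⟨lamb, -, ψ, hψ, hlslim⟩ := tendsto_subseq_of_bounded hbdd (mem_range_self (f := ls ∘ φ))
  have hpair : Tendsto (fun k => (zs (φ (ψ k)), ls (φ (ψ k)))) atTop (𝓝 (zb, lamb)) :=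
    (hlim.comp (hφ.comp hψ).tendsto_atTop).prodMk_nhds hlslim
  have hmem : (zb, lamb) ∈ svGraph K :=
    hgph.mem_of_tendsto hpair (Eventually.of_forall fun k => hls (φ (ψ k)))
  exact ⟨lamb, hmem, φ ∘ ψ, ls ∘ φ ∘ ψ, hφ.comp hψ, fun k => hls (φ (ψ k)), hpair⟩

theorem InnerSemicompactAt.isLocalMinOn {E F β : Type*} [TopologicalSpace E]
    [FirstCountableTopology E] [PseudoMetricSpace F] [ProperSpace F] [LinearOrder β]
    {f : E → β} {M : Set E} {K : E → Set F} {zb : E}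
    (hisc : InnerSemicompactAt K zb) (hgph : IsClosed (svGraph K))
    (hloc : ∀ lamb ∈ K zb, IsLocalMinOn (f ∘ Prod.fst) {p | p.1 ∈ M ∧ p.2 ∈ K p.1} (zb, lamb)) :
    IsLocalMinOn f (M ∩ svDom K) zb := by
  by_contra hmin
  obtain ⟨zs, hlim, hzs⟩ := exists_seq_tendsto_lt_of_not_isLocalMinOn hmin
  obtain ⟨lamb, hlamb, φ, ls, -, hls, hpair⟩ :=
    hisc.exists_subseq_tendsto_mem_graph hgph (fun k => (hzs k).1.2) hlim
  have hpair_feas : Tendsto (fun k => (zs (φ k), ls k)) atTop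
      (𝓝[{p | p.1 ∈ M ∧ p.2 ∈ K p.1}] (zb, lamb)) :=
    tendsto_nhdsWithin_iff.2 ⟨hpair, Eventually.of_forall fun k => ⟨(hzs (φ k)).1.1, hls k⟩⟩
  obtain ⟨k, hk⟩ := (hpair_feas.eventually (hloc lamb hlamb)).exists
  exact not_le.2 (hzs (φ k)).2 hk

theorem stmt_3_general {n m : ℕ} (f : EuclideanSpace ℝ (Fin n) → ℝ)
    (M : Set (EuclideanSpace ℝ (Fin n)))
    (K : EuclideanSpace ℝ (Fin n) → Set (EuclideanSpace ℝ (Fin m)))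
    (zb : EuclideanSpace ℝ (Fin n))
    (hgph : IsClosed (svGraph K))
    (hisc : InnerSemicompactAt K zb)
    (hloc : ∀ lamb ∈ K zb, ∃ V ∈ 𝓝 (zb, lamb),
      ∀ p ∈ V ∩ {p : EuclideanSpace ℝ (Fin n) × EuclideanSpace ℝ (Fin m) |
          p.1 ∈ M ∧ p.2 ∈ K p.1}, f zb ≤ f p.1) :
    ∃ U ∈ 𝓝 zb, ∀ z ∈ U ∩ (M ∩ svDom K), f zb ≤ f z := by
  have hmin : IsLocalMinOn f (M ∩ svDom K) zb :=
    hisc.isLocalMinOn hgph fun lamb hlamb =>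
      mem_nhdsWithin_iff_exists_mem_nhds_inter.2 (hloc lamb hlamb)
  exact mem_nhdsWithin_iff_exists_mem_nhds_inter.1 hmin

/-- If `f` is continuous, `gph K` is closed, `K` is inner semicompact at `zb ∈ M ∩ dom K`
w.r.t. `dom K`, and for every `lamb ∈ K zb` the pair `(zb, lamb)` is a local minimizer of
`(z, λ) ↦ f z` on `{(z, λ) | z ∈ M ∧ λ ∈ K z}`, then `zb` is a local minimizer of `f` on
`M ∩ dom K`. -/
theorem stmt_3 {n m : ℕ} (f : EuclideanSpace ℝ (Fin n) → ℝ)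
    (M : Set (EuclideanSpace ℝ (Fin n)))
    (K : EuclideanSpace ℝ (Fin n) → Set (EuclideanSpace ℝ (Fin m)))
    (zb : EuclideanSpace ℝ (Fin n))
    (hf : Continuous f)
    (hgph : IsClosed (svGraph K))
    (hfeas : zb ∈ M ∩ svDom K)
    (hisc : InnerSemicompactAt K zb)
    (hloc : ∀ lamb ∈ K zb, ∃ V ∈ 𝓝 (zb, lamb),
      ∀ p ∈ V ∩ {p : EuclideanSpace ℝ (Fin n) × EuclideanSpace ℝ (Fin m) |
          p.1 ∈ M ∧ p.2 ∈ K p.1}, f zb ≤ f p.1) :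
    ∃ U ∈ 𝓝 zb, ∀ z ∈ U ∩ (M ∩ svDom K), f zb ≤ f z :=
  stmt_3_general f M K zb hgph hisc hloc
end
end

section
/- Let K : ℝ^n → Set ℝ^m be a set-valued mapping with closed graph gph K = {(z, λ) | λ ∈ K z}, and let z̄ ∈ dom K be a point at which K is inner semicompact w.r.t. dom K. Then: (i) for every λ̄ ∈ K z̄ and every (w, d) in the Bouligand tangent cone T_{gph K}(z̄, λ̄), the vector w belongs to T_{dom K}(z̄); consequently ⋃_{λ̄ ∈ K z̄} {w | ∃ d, (w, d) ∈ T_{gph K}(z̄, λ̄)} ⊆ T_{dom K}(z̄); (ii) if, in addition, K is inner calm* in the fuzzy sense at z̄ w.r.t. dom K, then every w ∈ T_{dom K}(z̄) lies in this union, i.e., equality holds. -/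
open Filter Metric Set Bornology
open scoped RealInnerProductSpace Topology Pointwise

noncomputable section

lemma smul_mem_btc {E : Type*} [NormedAddCommGroup E] [NormedSpace ℝ E]
    {Ω : Set E} {x : E} {w : E} {c : ℝ} (hc : 0 < c)
    (hw : w ∈ bouligandTangentCone Ω x) : c • w ∈ bouligandTangentCone Ω x := by
  obtain ⟨t, v, ht, ht0, hv, hmem⟩ := hw
  refine ⟨fun k => t k / c, fun k => c • v k, fun k => div_pos (ht k) hc, ?_, ?_, ?_⟩
  · simpa using ht0.div_const c
  · exact hv.const_smul c
  · intro k
    have h : (t k / c) • (c • v k) = t k • v k := by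
      rw [smul_smul, div_mul_cancel₀ _ hc.ne']
    rw [h]; exact hmem k

/-- Tangents to the domain versus tangents to the graph of a set-valued mapping:
(i) the union over `lamb ∈ K zb` of the domains of the graphical derivatives is always
contained in the tangent cone to `dom K`; (ii) under inner calmness* in the fuzzy sense,
equality holds. -/
theorem stmt_4 {n m : ℕ}
    (K : EuclideanSpace ℝ (Fin n) → Set (EuclideanSpace ℝ (Fin m)))
    (zb : EuclideanSpace ℝ (Fin n))
    (hgph : IsClosed (svGraph K))
    (hdom : zb ∈ svDom K)
    (hisc : InnerSemicompactAt K zb) :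
    ((⋃ lamb ∈ K zb, {w : EuclideanSpace ℝ (Fin n) |
        ∃ d, (w, d) ∈ bouligandTangentCone (svGraph K) (zb, lamb)})
      ⊆ bouligandTangentCone (svDom K) zb) ∧
    (InnerCalmStarFuzzyAt K zb →
      bouligandTangentCone (svDom K) zb
        ⊆ ⋃ lamb ∈ K zb, {w : EuclideanSpace ℝ (Fin n) |
            ∃ d, (w, d) ∈ bouligandTangentCone (svGraph K) (zb, lamb)}) := by
  constructor
  · intro w hw
    simp only [mem_iUnion, mem_setOf_eq] at hw
    obtain ⟨lamb, hlamb, d, t, v, ht, ht0, hv, hmem⟩ := hw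
    refine ⟨t, fun k => (v k).1, ht, ht0, ?_, ?_⟩
    · exact (continuous_fst.tendsto _).comp hv
    · intro k
      exact ⟨lamb + t k • (v k).2, hmem k⟩
  · intro hcalm w hw
    rcases eq_or_ne w 0 with rfl | hw0
    · obtain ⟨lamb, hlamb⟩ := hdom
      refine mem_iUnion.2 ⟨lamb, mem_iUnion.2 ⟨hlamb, 0, ?_⟩⟩
      refine ⟨fun k => 1 / (k + 1), fun _ => 0, fun k => by positivity, ?_, ?_, ?_⟩
      · exact tendsto_one_div_add_atTop_nhds_zero_nat
      · exact tendsto_const_nhds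
      · intro k; simpa [svGraph] using hlamb
    · set c : ℝ := ‖w‖ with hc
      have hcpos : 0 < c := norm_pos_iff.2 hw0
      set d : EuclideanSpace ℝ (Fin n) := c⁻¹ • w with hdw
      have hd : d ∈ bouligandTangentCone (svDom K) zb :=
        smul_mem_btc (inv_pos.2 hcpos) hw
      have hdnorm : ‖d‖ = 1 := by
        rw [hdw, norm_smul, norm_inv, norm_norm, inv_mul_cancel₀ hcpos.ne']
      obtain ⟨κ, hκ, lb, t, ds, ls, ht, ht0, hds, hls, hcond⟩ := hcalm d hd hdnorm
      have hmemg : ∀ k, (zb + t k • ds k, ls k) ∈ svGraph K := fun k => (hcond k).1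
      have htd : Tendsto (fun k => zb + t k • ds k) atTop (𝓝 zb) := by
        have h2 : Tendsto (fun k => t k • ds k) atTop (𝓝 ((0 : ℝ) • d)) := ht0.smul hds
        simpa using tendsto_const_nhds.add h2
      have hlb : lb ∈ K zb :=
        hgph.mem_of_tendsto (htd.prodMk_nhds hls) (Eventually.of_forall hmemg)
      set v2 : ℕ → EuclideanSpace ℝ (Fin m) := fun k => (t k)⁻¹ • (ls k - lb) with hv2
      obtain ⟨C, hC⟩ : ∃ C, ∀ k, ‖ds k‖ ≤ C := by
        obtain ⟨C, hCub⟩ := hds.norm.bddAbove_range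
        exact ⟨C, fun k => hCub ⟨k, rfl⟩⟩
      have hv2b : ∀ k, v2 k ∈ closedBall (0 : EuclideanSpace ℝ (Fin m)) (κ * C) := by
        intro k
        rw [mem_closedBall_zero_iff, hv2]
        rw [norm_smul, norm_inv, Real.norm_eq_abs, abs_of_pos (ht k)]
        have h1 : ‖ls k - lb‖ ≤ κ * t k * ‖ds k‖ := (hcond k).2
        calc (t k)⁻¹ * ‖ls k - lb‖ ≤ (t k)⁻¹ * (κ * t k * ‖ds k‖) :=
              mul_le_mul_of_nonneg_left h1 (inv_nonneg.2 (ht k).le)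
          _ = κ * ‖ds k‖ := by field_simp [(ht k).ne']
          _ ≤ κ * C := mul_le_mul_of_nonneg_left (hC k) hκ.le
      obtain ⟨μ, -, φ, hφ, hμ⟩ := tendsto_subseq_of_bounded isBounded_closedBall hv2b
      refine mem_iUnion.2 ⟨lb, mem_iUnion.2 ⟨hlb, c • μ, ?_⟩⟩
      refine ⟨fun k => t (φ k) / c, fun k => c • (ds (φ k), v2 (φ k)),
        fun k => div_pos (ht _) hcpos, ?_, ?_, ?_⟩
      · simpa using (ht0.comp hφ.tendsto_atTop).div_const c
      · have hlim : Tendsto (fun k => (ds (φ k), v2 (φ k))) atTop (𝓝 (d, μ)) :=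
          (hds.comp hφ.tendsto_atTop).prodMk_nhds hμ
        have h3 := hlim.const_smul c
        have hcd : c • ((d, μ) : EuclideanSpace ℝ (Fin n) × EuclideanSpace ℝ (Fin m))
            = (w, c • μ) := by
          rw [Prod.smul_mk, hdw, smul_inv_smul₀ hcpos.ne']
        rwa [hcd] at h3
      · intro k
        have hsm : (t (φ k) / c) • (c • ((ds (φ k), v2 (φ k)) :
            EuclideanSpace ℝ (Fin n) × EuclideanSpace ℝ (Fin m)))
            = t (φ k) • (ds (φ k), v2 (φ k)) := by
          rw [smul_smul, div_mul_cancel₀ _ hcpos.ne']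
        rw [hsm]
        have hlsk : lb + t (φ k) • v2 (φ k) = ls (φ k) := by
          rw [hv2]
          simp [smul_smul, mul_inv_cancel₀ (ht (φ k)).ne']
        have heq : ((zb, lb) : EuclideanSpace ℝ (Fin n) × EuclideanSpace ℝ (Fin m))
            + t (φ k) • (ds (φ k), v2 (φ k)) = (zb + t (φ k) • ds (φ k), ls (φ k)) := by
          rw [Prod.smul_mk, Prod.mk_add_mk, hlsk]
        rw [heq]
        exact hmemg (φ k)
end
end

section
/- Let f : ℝ^n → ℝ be continuously differentiable, M ⊆ ℝ^n closed, and K : ℝ^n → Set ℝ^m a set-valued mapping with closed graph; let z̄ ∈ M ∩ dom K be a point at which K is inner semicompact w.r.t. dom K. If z̄ is implicitly B-stationary, i.e., ⟪∇f(z̄), w⟫ ≥ 0 for all w ∈ T_M(z̄) ∩ T_{dom K}(z̄), then z̄ is (a) abstractly B-stationary: ⟪∇f(z̄), w⟫ ≥ 0 for all w ∈ T_{M ∩ dom K}(z̄), and (b) explicitly B-stationary: for every λ̄ ∈ K z̄ and every w ∈ T_M(z̄) such that (w, d) ∈ T_{gph K}(z̄, λ̄) for some d ∈ ℝ^m, one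 has ⟪∇f(z̄), w⟫ ≥ 0. -/
/-! Bouligand tangent cones are monotone in the set and are mapped into tangent cones by continuous
linear maps. So `T_{M ∩ dom K}(z̄) ⊆ T_M(z̄) ∩ T_{dom K}(z̄)`, and since `dom K` is the projection
of `gph K`, `(w, d) ∈ T_{gph K}(z̄, λ̄)` forces `w ∈ T_{dom K}(z̄)`. -/

open Filter Metric Set Bornology
open scoped RealInnerProductSpace Topology Pointwise

noncomputable section

theorem image_fst_svGraph {E F : Type*} (K : E → Set F) : Prod.fst '' svGraph K = svDom K := by
  ext z
  simp [svGraph, svDom, Set.Nonempty]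

section BouligandTangentCone

variable {E F : Type*} [NormedAddCommGroup E] [NormedSpace ℝ E]
  [NormedAddCommGroup F] [NormedSpace ℝ F]

theorem bouligandTangentCone_mono {s t : Set E} (hst : s ⊆ t) (x : E) :
    bouligandTangentCone s x ⊆ bouligandTangentCone t x := by
  rintro w ⟨τ, v, hτ, hτ0, hv, hmem⟩
  exact ⟨τ, v, hτ, hτ0, hv, fun k => hst (hmem k)⟩

theorem bouligandTangentCone_inter_subset (s t : Set E) (x : E) :
    bouligandTangentCone (s ∩ t) x ⊆ bouligandTangentCone s x ∩ bouligandTangentCone t x :=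
  subset_inter (bouligandTangentCone_mono inter_subset_left x)
    (bouligandTangentCone_mono inter_subset_right x)

theorem ContinuousLinearMap.mapsTo_bouligandTangentCone (L : E →L[ℝ] F) (s : Set E) (x : E) :
    MapsTo L (bouligandTangentCone s x) (bouligandTangentCone (L '' s) (L x)) := by
  rintro w ⟨τ, v, hτ, hτ0, hv, hmem⟩
  refine ⟨τ, fun k => L (v k), hτ, hτ0, (L.continuous.tendsto w).comp hv,
    fun k => ⟨_, hmem k, ?_⟩⟩
  rw [map_add, map_smul]

theorem mem_bouligandTangentCone_svDom_of_mem_svGraph {K : E → Set F} {z w : E} {l d : F}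
    (h : (w, d) ∈ bouligandTangentCone (svGraph K) (z, l)) :
    w ∈ bouligandTangentCone (svDom K) z := by
  simpa [image_fst_svGraph] using
    (ContinuousLinearMap.fst ℝ E F).mapsTo_bouligandTangentCone (svGraph K) (z, l) h

end BouligandTangentCone

theorem stmt_6_general {n m : ℕ} (f : EuclideanSpace ℝ (Fin n) → ℝ)
    (M : Set (EuclideanSpace ℝ (Fin n)))
    (K : EuclideanSpace ℝ (Fin n) → Set (EuclideanSpace ℝ (Fin m)))
    (zb : EuclideanSpace ℝ (Fin n))
    (hstat : ∀ w ∈ bouligandTangentCone M zb ∩ bouligandTangentCone (svDom K) zb,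
      0 ≤ ⟪gradient f zb, w⟫) :
    (∀ w ∈ bouligandTangentCone (M ∩ svDom K) zb, 0 ≤ ⟪gradient f zb, w⟫) ∧
    (∀ lamb ∈ K zb, ∀ w ∈ bouligandTangentCone M zb,
      (∃ d, (w, d) ∈ bouligandTangentCone (svGraph K) (zb, lamb)) →
        0 ≤ ⟪gradient f zb, w⟫) := by
  refine ⟨fun w hw => hstat w (bouligandTangentCone_inter_subset M (svDom K) zb hw), ?_⟩
  rintro lamb - w hw ⟨d, hwd⟩
  exact hstat w ⟨hw, mem_bouligandTangentCone_svDom_of_mem_svGraph hwd⟩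

/-- If `zb` is implicitly B-stationary, then it is abstractly B-stationary and explicitly
B-stationary. -/
theorem stmt_6 {n m : ℕ} (f : EuclideanSpace ℝ (Fin n) → ℝ)
    (M : Set (EuclideanSpace ℝ (Fin n)))
    (K : EuclideanSpace ℝ (Fin n) → Set (EuclideanSpace ℝ (Fin m)))
    (zb : EuclideanSpace ℝ (Fin n))
    (hf : ContDiff ℝ 1 f)
    (hM : IsClosed M)
    (hgph : IsClosed (svGraph K))
    (hfeas : zb ∈ M ∩ svDom K)
    (hisc : InnerSemicompactAt K zb)
    (hstat : ∀ w ∈ bouligandTangentCone M zb ∩ bouligandTangentCone (svDom K) zb,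
      0 ≤ ⟪gradient f zb, w⟫) :
    (∀ w ∈ bouligandTangentCone (M ∩ svDom K) zb, 0 ≤ ⟪gradient f zb, w⟫) ∧
    (∀ lamb ∈ K zb, ∀ w ∈ bouligandTangentCone M zb,
      (∃ d, (w, d) ∈ bouligandTangentCone (svGraph K) (zb, lamb)) →
        0 ≤ ⟪gradient f zb, w⟫) :=
  stmt_6_general f M K zb hstat
end
end

section
/- Let f : ℝ^n → ℝ be continuously differentiable, M ⊆ ℝ^n closed, and K : ℝ^n → Set ℝ^m a set-valued mapping with closed graph; let z̄ ∈ M ∩ dom K be a point at which K is inner semicompact and inner calm* in the fuzzy sense w.r.t. dom K. If z̄ is explicitly B-stationary, i.e., for every λ̄ ∈ K z̄ and every w ∈ T_M(z̄) such that (w, d) ∈ T_{gph K}(z̄, λ̄) for some d ∈ ℝ^m one has ⟪∇f(z̄), w⟫ ≥ 0, then z̄ is implicitly B-stationary: ⟪∇f(z̄), w⟫ ≥ 0 for all w ∈ T_M(z̄) ∩ T_{dom K}(z̄). -/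
open Filter Metric Set Bornology
open scoped RealInnerProductSpace Topology Pointwise

noncomputable section

lemma btc_smul {E : Type*} [NormedAddCommGroup E] [NormedSpace ℝ E]
    {Ω : Set E} {x w : E} {c : ℝ} (hc : 0 < c)
    (hw : w ∈ bouligandTangentCone Ω x) : c • w ∈ bouligandTangentCone Ω x := by
  obtain ⟨t, v, ht0, ht, hv, hmem⟩ := hw
  refine ⟨fun k => c⁻¹ * t k, fun k => c • v k, fun k => mul_pos (inv_pos.mpr hc) (ht0 k), ?_, ?_, fun k => ?_⟩
  · simpa using ht.const_mul c⁻¹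
  · exact hv.const_smul c
  · have : (c⁻¹ * t k) • c • v k = t k • v k := by
      rw [smul_smul]
      congr 1
      rw [mul_comm c⁻¹ (t k), mul_assoc, inv_mul_cancel₀ hc.ne', mul_one]
    rw [this]; exact hmem k

/-- If `zb` is explicitly B-stationary and `K` is inner calm* in the fuzzy sense at `zb`
w.r.t. `dom K`, then `zb` is implicitly B-stationary. -/
theorem stmt_7 {n m : ℕ} (f : EuclideanSpace ℝ (Fin n) → ℝ)
    (M : Set (EuclideanSpace ℝ (Fin n)))
    (K : EuclideanSpace ℝ (Fin n) → Set (EuclideanSpace ℝ (Fin m)))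
    (zb : EuclideanSpace ℝ (Fin n))
    (hf : ContDiff ℝ 1 f)
    (hM : IsClosed M)
    (hgph : IsClosed (svGraph K))
    (hfeas : zb ∈ M ∩ svDom K)
    (hisc : InnerSemicompactAt K zb)
    (hicf : InnerCalmStarFuzzyAt K zb)
    (hstat : ∀ lamb ∈ K zb, ∀ w ∈ bouligandTangentCone M zb,
      (∃ d, (w, d) ∈ bouligandTangentCone (svGraph K) (zb, lamb)) →
        0 ≤ ⟪gradient f zb, w⟫) :
    ∀ w ∈ bouligandTangentCone M zb ∩ bouligandTangentCone (svDom K) zb,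
      0 ≤ ⟪gradient f zb, w⟫ := by
  intro w hw
  rcases hw with ⟨hwM, hwD⟩
  rcases eq_or_ne w 0 with rfl | hw0
  · simp
  have hnw : (0:ℝ) < ‖w‖ := norm_pos_iff.mpr hw0
  set d : EuclideanSpace ℝ (Fin n) := ‖w‖⁻¹ • w with hd
  have hdD : d ∈ bouligandTangentCone (svDom K) zb := btc_smul (by positivity) hwD
  have hdM : d ∈ bouligandTangentCone M zb := btc_smul (by positivity) hwM
  have hdnorm : ‖d‖ = 1 := by
    rw [hd, norm_smul, norm_inv, norm_norm, inv_mul_cancel₀ (ne_of_gt hnw)]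
  obtain ⟨κ, hκ, lb, t, ds, ls, ht0, ht, hds, hls, hmem⟩ := hicf d hdD hdnorm
  -- lb ∈ K zb by closedness of the graph
  have htds : Tendsto (fun k => t k • ds k) atTop (𝓝 0) := by
    simpa using ht.smul hds
  have hzs : Tendsto (fun k => zb + t k • ds k) atTop (𝓝 zb) := by
    simpa using tendsto_const_nhds.add htds
  have hlbK : lb ∈ K zb := by
    have : (zb, lb) ∈ svGraph K :=
      hgph.mem_of_tendsto (hzs.prodMk_nhds hls)
        (Eventually.of_forall fun k => (hmem k).1)
    exact this
  -- bounded difference quotients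
  set u : ℕ → EuclideanSpace ℝ (Fin m) := fun k => (t k)⁻¹ • (ls k - lb) with hu
  obtain ⟨C, hC⟩ := (hds.norm).bddAbove_range
  have hub : ∀ k, ‖u k‖ ≤ κ * C := by
    intro k
    have hCk : ‖ds k‖ ≤ C := hC ⟨k, rfl⟩
    have h1 : ‖u k‖ = (t k)⁻¹ * ‖ls k - lb‖ := by
      rw [hu]; rw [norm_smul, Real.norm_eq_abs, abs_of_pos (inv_pos.mpr (ht0 k))]
    have h2 : ‖ls k - lb‖ ≤ κ * t k * ‖ds k‖ := (hmem k).2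
    rw [h1]
    calc (t k)⁻¹ * ‖ls k - lb‖ ≤ (t k)⁻¹ * (κ * t k * ‖ds k‖) := by
          exact mul_le_mul_of_nonneg_left h2 (le_of_lt (inv_pos.mpr (ht0 k)))
      _ = κ * ‖ds k‖ := by have htk := (ht0 k).ne'; field_simp
      _ ≤ κ * C := by exact mul_le_mul_of_nonneg_left hCk (le_of_lt hκ)
  have hbdd : IsBounded (Set.range u) := by
    rw [isBounded_iff_forall_norm_le]
    exact ⟨κ * C, by rintro y ⟨k, rfl⟩; exact hub k⟩
  obtain ⟨d', -, φ, hφ, hconv⟩ := tendsto_subseq_of_bounded hbdd (fun k => mem_range_self k)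
  -- (d, d') ∈ tangent cone to graph
  have hgr : (d, d') ∈ bouligandTangentCone (svGraph K) (zb, lb) := by
    refine ⟨fun k => t (φ k), fun k => (ds (φ k), u (φ k)), fun k => ht0 _, ?_, ?_, fun k => ?_⟩
    · exact ht.comp hφ.tendsto_atTop
    · exact (hds.comp hφ.tendsto_atTop).prodMk_nhds hconv
    · have hueq : t (φ k) • u (φ k) = ls (φ k) - lb := by
        rw [hu]; rw [smul_smul, mul_inv_cancel₀ (ne_of_gt (ht0 (φ k))), one_smul]
      show (zb + t (φ k) • ds (φ k), lb + t (φ k) • u (φ k)) ∈ svGraph K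
      rw [hueq]
      have : lb + (ls (φ k) - lb) = ls (φ k) := by abel
      rw [this]
      exact (hmem (φ k)).1
  have hkey : 0 ≤ ⟪gradient f zb, d⟫ := hstat lb hlbK d hdM ⟨d', hgr⟩
  have : w = ‖w‖ • d := by
    rw [hd, smul_smul, mul_inv_cancel₀ (ne_of_gt hnw), one_smul]
  rw [this, real_inner_smul_right]
  positivity
end
end

section
/- Let M ⊆ ℝ^n be closed and let K : ℝ^n → Set ℝ^m have closed graph; let z̄ ∈ M ∩ dom K be a point at which K is inner semicompact w.r.t. dom K. Assume that for every λ̄ ∈ K z̄ there exist κ > 0 and a neighborhood V of (z̄, λ̄) in ℝ^n × ℝ^m such that dist((z, λ), (M × ℝ^m) ∩ gph K) ≤ κ (dist(z, M) + dist((z, λ), gph K)) for all (z, λ) ∈ V. Then there exist κ > 0 and a neighborhood U of z̄ such that dist(z, M ∩ dom K) ≤ κ (dist(z, M) + dist(z, dom K)) for all z ∈ U. -/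
open Filter Metric Set Bornology
open scoped RealInnerProductSpace Topology Pointwise

noncomputable section

/-- If the explicit metric subregularity estimate holds at `(zb, lamb)` for every
`lamb ∈ K zb`, then the implicit metric subregularity (subtransversality) estimate holds
at `zb`. -/
theorem stmt_14 {n m : ℕ}
    (M : Set (EuclideanSpace ℝ (Fin n)))
    (K : EuclideanSpace ℝ (Fin n) → Set (EuclideanSpace ℝ (Fin m)))
    (zb : EuclideanSpace ℝ (Fin n))
    (hM : IsClosed M)
    (hgph : IsClosed (svGraph K))
    (hfeas : zb ∈ M ∩ svDom K)
    (hisc : InnerSemicompactAt K zb)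
    (hexp : ∀ lamb ∈ K zb, ∃ κ > (0 : ℝ), ∃ V ∈ 𝓝 (zb, lamb), ∀ p ∈ V,
      infDist p ((M ×ˢ (univ : Set (EuclideanSpace ℝ (Fin m)))) ∩ svGraph K)
        ≤ κ * (infDist p.1 M + infDist p (svGraph K))) :
    ∃ κ > (0 : ℝ), ∃ U ∈ 𝓝 zb, ∀ z ∈ U,
      infDist z (M ∩ svDom K) ≤ κ * (infDist z M + infDist z (svDom K)) := by
  obtain ⟨hzM, hzdom⟩ := hfeas
  have hdomne : (svDom K).Nonempty := ⟨zb, hzdom⟩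
  by_contra hcon
  push_neg at hcon
  have hz : ∀ k : ℕ, ∃ x ∈ ball zb (1/((k:ℝ)+1)),
      ((k:ℝ)+1) * (infDist x M + infDist x (svDom K)) < infDist x (M ∩ svDom K) := by
    intro k
    obtain ⟨x, hx1, hx2⟩ := hcon ((k:ℝ)+1) (by positivity) (ball zb (1/((k:ℝ)+1)))
      (ball_mem_nhds _ (by positivity))
    exact ⟨x, hx1, hx2⟩
  choose z hzball hzlt using hz
  have hzdist : ∀ k, dist (z k) zb < 1/((k:ℝ)+1) := fun k => mem_ball.mp (hzball k)
  have hDpos : ∀ k, 0 < infDist (z k) (M ∩ svDom K) := by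
    intro k
    have h0 : (0:ℝ) ≤ infDist (z k) M + infDist (z k) (svDom K) :=
      add_nonneg infDist_nonneg infDist_nonneg
    nlinarith [hzlt k, (Nat.cast_nonneg k : (0:ℝ) ≤ (k:ℝ))]
  have hu : ∀ k, ∃ w ∈ svDom K, dist (z k) w <
      infDist (z k) (svDom K) + infDist (z k) (M ∩ svDom K) / ((k:ℝ)+1) := by
    intro k
    refine (infDist_lt_iff hdomne).1 ?_
    have h1 : 0 < infDist (z k) (M ∩ svDom K) / ((k:ℝ)+1) := by
      have := hDpos k; positivity
    linarith
  choose u hudom hudist using hu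
  have hDle : ∀ k, infDist (z k) (M ∩ svDom K) ≤ dist (z k) zb :=
    fun k => infDist_le_dist_of_mem ⟨hzM, hzdom⟩
  have hadle : ∀ k, infDist (z k) (svDom K) ≤ dist (z k) zb :=
    fun k => infDist_le_dist_of_mem hzdom
  have huzb : ∀ k, dist (u k) zb < 3/((k:ℝ)+1) := by
    intro k
    have h1 := hudist k
    have h2 := hzdist k
    have h3 := hDle k
    have h4 := hadle k
    have hk1 : (1:ℝ) ≤ (k:ℝ)+1 := by
      have : (0:ℝ) ≤ (k:ℝ) := Nat.cast_nonneg k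
      linarith
    have hdiv : infDist (z k) (M ∩ svDom K) / ((k:ℝ)+1) ≤ infDist (z k) (M ∩ svDom K) :=
      div_le_self infDist_nonneg hk1
    have htri : dist (u k) zb ≤ dist (z k) (u k) + dist (z k) zb := by
      rw [dist_comm (z k) (u k)]; exact dist_triangle _ _ _
    have h5 : (3:ℝ)/((k:ℝ)+1) = 1/((k:ℝ)+1) + 1/((k:ℝ)+1) + 1/((k:ℝ)+1) := by ring
    linarith
  have hztend : Tendsto z atTop (𝓝 zb) := by
    rw [tendsto_iff_dist_tendsto_zero]
    exact squeeze_zero (fun k => dist_nonneg) (fun k => (hzdist k).le)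
      tendsto_one_div_add_atTop_nhds_zero_nat
  have hutend : Tendsto u atTop (𝓝 zb) := by
    rw [tendsto_iff_dist_tendsto_zero]
    refine squeeze_zero (fun k => dist_nonneg) (fun k => (huzb k).le) ?_
    have := tendsto_one_div_add_atTop_nhds_zero_nat.const_mul (3:ℝ)
    simpa [mul_one_div, div_eq_mul_inv] using this
  obtain ⟨ls, hls, φ, hφ, hbd⟩ := hisc u hudom hutend
  obtain ⟨lamb, -, ψ, hψ, hconv⟩ := hbd.isCompact_closure.tendsto_subseq
    (x := ls ∘ φ) (fun k => subset_closure (Set.mem_range_self k))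
  set σ : ℕ → ℕ := φ ∘ ψ with hσdef
  have hσ : StrictMono σ := hφ.comp hψ
  have hσtop : Tendsto σ atTop atTop := hσ.tendsto_atTop
  have hlstend : Tendsto (fun k => ls (σ k)) atTop (𝓝 lamb) := hconv
  have hutendσ : Tendsto (fun k => u (σ k)) atTop (𝓝 zb) := hutend.comp hσtop
  have hlamb : lamb ∈ K zb := by
    have hmem : ∀ k, ((u (σ k), ls (σ k)) : _ × _) ∈ svGraph K := fun k => hls (σ k)
    have := hgph.mem_of_tendsto (hutendσ.prodMk_nhds hlstend)
      (Filter.Eventually.of_forall hmem)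
    exact this
  obtain ⟨κ, hκ, V, hV, hest⟩ := hexp lamb hlamb
  have hztendσ : Tendsto (fun k => z (σ k)) atTop (𝓝 zb) := hztend.comp hσtop
  have hpV : ∀ᶠ k in atTop, ((z (σ k), ls (σ k)) : _ × _) ∈ V :=
    (hztendσ.prodMk_nhds hlstend).eventually_mem hV
  have hbig : ∀ᶠ k in atTop, 2*κ ≤ ((σ k : ℕ) : ℝ) := by
    filter_upwards [eventually_ge_atTop ⌈2*κ⌉₊] with k hk
    calc 2*κ ≤ (⌈2*κ⌉₊ : ℝ) := Nat.le_ceil _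
      _ ≤ (k : ℝ) := by exact_mod_cast hk
      _ ≤ ((σ k : ℕ) : ℝ) := by exact_mod_cast Nat.cast_le.2 (hσ.le_apply)
  obtain ⟨k, hkV, hkbig⟩ := (hpV.and hbig).exists
  set j := σ k with hjdef
  set D := infDist (z j) (M ∩ svDom K) with hDdef
  set aM := infDist (z j) M with haMdef
  set ad := infDist (z j) (svDom K) with haddef
  set J : ℝ := (j:ℝ)+1 with hJdef
  have hJpos : 0 < J := by positivity
  have hDj : 0 < D := hDpos j
  have hlt : J * (aM + ad) < D := hzlt j
  have Sne : ((M ×ˢ (univ : Set (EuclideanSpace ℝ (Fin m)))) ∩ svGraph K).Nonempty :=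
    ⟨(zb, lamb), ⟨⟨hzM, mem_univ _⟩, hlamb⟩⟩
  have h2 : D ≤ infDist ((z j, ls j) : _ × _)
      ((M ×ˢ (univ : Set (EuclideanSpace ℝ (Fin m)))) ∩ svGraph K) := by
    by_contra hlt2
    push_neg at hlt2
    obtain ⟨q, hq, hqd⟩ := (infDist_lt_iff Sne).1 hlt2
    obtain ⟨⟨hq1, -⟩, hq2⟩ := hq
    have hq1' : q.1 ∈ M ∩ svDom K := ⟨hq1, ⟨q.2, hq2⟩⟩
    have : D ≤ dist (z j) q.1 := infDist_le_dist_of_mem hq1'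
    have hle : dist (z j) q.1 ≤ dist ((z j, ls j) : _ × _) q := by
      rw [Prod.dist_eq]; exact le_max_left _ _
    linarith
  have h3 : infDist ((z j, ls j) : _ × _) (svGraph K) ≤ dist (z j) (u j) := by
    have hm : ((u j, ls j) : _ × _) ∈ svGraph K := hls j
    have := infDist_le_dist_of_mem (x := ((z j, ls j) : _ × _)) hm
    rwa [Prod.dist_eq, dist_self, max_eq_left dist_nonneg] at this
  have hestj := hest (z j, ls j) hkV
  have h4 : dist (z j) (u j) < ad + D / J := hudist j
  have hmain : D ≤ κ * (aM + ad + D / J) := by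
    have hg : infDist ((z j, ls j) : _ × _) (svGraph K) ≤ ad + D / J := le_trans h3 h4.le
    have hmul : κ * (aM + infDist ((z j, ls j) : _ × _) (svGraph K)) ≤ κ * (aM + (ad + D/J)) := by
      apply mul_le_mul_of_nonneg_left _ hκ.le
      linarith
    calc D ≤ infDist ((z j, ls j) : _ × _) ((M ×ˢ (univ : Set (EuclideanSpace ℝ (Fin m)))) ∩ svGraph K) := h2
      _ ≤ κ * (aM + infDist ((z j, ls j) : _ × _) (svGraph K)) := hestj
      _ ≤ κ * (aM + (ad + D/J)) := hmul
      _ = κ * (aM + ad + D/J) := by ring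
  have hexpand : J * (aM + ad + D/J) = J*(aM+ad) + D := by
    field_simp
  have hmul2 : J * D ≤ κ * (J*(aM+ad) + D) := by
    calc J * D ≤ J * (κ * (aM + ad + D/J)) := mul_le_mul_of_nonneg_left hmain hJpos.le
      _ = κ * (J * (aM + ad + D/J)) := by ring
      _ = κ * (J*(aM+ad) + D) := by rw [hexpand]
  have hfin1 : κ * (J*(aM+ad)) < κ * D := mul_lt_mul_of_pos_left hlt hκ
  have hfin2 : (2*κ) * D ≤ J * D := by
    apply mul_le_mul_of_nonneg_right _ hDj.le
    have : 2*κ ≤ (j:ℝ) := hkbig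
    simp only [hJdef]; linarith
  nlinarith [hmul2, hfin1, hfin2]
end
end

section
/- Let M ⊆ ℝ^n be closed and let K : ℝ^n → Set ℝ^m have closed graph; let z̄ ∈ M ∩ dom K be such that K z̄ = {λ̄} is a singleton and K is inner semicompact and inner calm* in the fuzzy sense w.r.t. dom K at z̄. If the regular normal cone intersection rule holds for the explicit problem, i.e., N̂_{(M × ℝ^m) ∩ gph K}(z̄, λ̄) = N̂_M(z̄) × {0} + N̂_{gph K}(z̄, λ̄), then the regular normal cone intersection rule holds for the implicit problem: N̂_{M ∩ dom K}(z̄) = N̂_M(z̄) + N̂_{dom K}(z̄). -/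
open Filter Metric Set Bornology
open scoped RealInnerProductSpace Topology Pointwise

noncomputable section

/-- Monotonicity of the Bouligand tangent cone. -/
lemma bouligandTangentCone_mono_s15 {E : Type*} [NormedAddCommGroup E] [NormedSpace ℝ E]
    {Ω₁ Ω₂ : Set E} (h : Ω₁ ⊆ Ω₂) (x : E) :
    bouligandTangentCone Ω₁ x ⊆ bouligandTangentCone Ω₂ x := by
  rintro w ⟨t, v, ht, ht0, hv, hmem⟩
  exact ⟨t, v, ht, ht0, hv, fun k => h (hmem k)⟩

/-- The Bouligand tangent cone is a cone: positive scalings stay inside. -/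
lemma bouligandTangentCone_smul {E : Type*} [NormedAddCommGroup E] [NormedSpace ℝ E]
    {Ω : Set E} {x : E} {w : E} (hw : w ∈ bouligandTangentCone Ω x) {c : ℝ} (hc : 0 < c) :
    c • w ∈ bouligandTangentCone Ω x := by
  obtain ⟨t, v, ht, ht0, hv, hmem⟩ := hw
  refine ⟨fun k => c⁻¹ * t k, fun k => c • v k, fun k => mul_pos (inv_pos.mpr hc) (ht k), ?_, ?_, fun k => ?_⟩
  · simpa using ht0.const_mul c⁻¹
  · exact hv.const_smul c
  · have : (c⁻¹ * t k) • (c • v k) = t k • v k := by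
      rw [smul_smul]
      congr 1
      field_simp
    rw [this]
    exact hmem k

/-- If `K zb = {lamb}` is a singleton, `K` is inner semicompact and inner calm* in the
fuzzy sense at `zb` w.r.t. `dom K`, and the regular normal cone intersection rule holds for
the explicit problem, then it holds for the implicit problem. -/
theorem stmt_15 {n m : ℕ}
    (M : Set (EuclideanSpace ℝ (Fin n)))
    (K : EuclideanSpace ℝ (Fin n) → Set (EuclideanSpace ℝ (Fin m)))
    (zb : EuclideanSpace ℝ (Fin n)) (lamb : EuclideanSpace ℝ (Fin m))
    (hM : IsClosed M)
    (hgph : IsClosed (svGraph K))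
    (hfeas : zb ∈ M ∩ svDom K)
    (hsingle : K zb = {lamb})
    (hisc : InnerSemicompactAt K zb)
    (hicf : InnerCalmStarFuzzyAt K zb)
    (hexp : regNormalConeProd
        ((M ×ˢ (univ : Set (EuclideanSpace ℝ (Fin m)))) ∩ svGraph K) (zb, lamb)
      = (regNormalCone M zb) ×ˢ ({0} : Set (EuclideanSpace ℝ (Fin m)))
          + regNormalConeProd (svGraph K) (zb, lamb)) :
    regNormalCone (M ∩ svDom K) zb
      = regNormalCone M zb + regNormalCone (svDom K) zb := by
  apply Subset.antisymm
  · -- hard direction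
    intro ζ hζ
    -- Step 1: (ζ, 0) belongs to the explicit normal cone
    have hstep1 : ((ζ, (0 : EuclideanSpace ℝ (Fin m))) : _ × _) ∈
        regNormalConeProd ((M ×ˢ (univ : Set (EuclideanSpace ℝ (Fin m)))) ∩ svGraph K)
          (zb, lamb) := by
      rintro q ⟨t, v, ht, ht0, hv, hmem⟩
      have hq1 : q.1 ∈ bouligandTangentCone (M ∩ svDom K) zb := by
        refine ⟨t, fun k => (v k).1, ht, ht0, (continuous_fst.tendsto q).comp hv, fun k => ?_⟩
        obtain ⟨hmemM, hmemG⟩ := hmem k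
        constructor
        · simpa using hmemM.1
        · refine ⟨lamb + t k • (v k).2, ?_⟩
          simpa [svGraph, Prod.add_def, Prod.smul_def] using hmemG
      have := hζ q.1 hq1
      simpa using this
    rw [hexp] at hstep1
    obtain ⟨a, ha, b, hb, hab⟩ := Set.mem_add.mp hstep1
    have ha1 : a.1 ∈ regNormalCone M zb := ha.1
    have ha2 : a.2 = 0 := ha.2
    have hab1 : a.1 + b.1 = ζ := congrArg Prod.fst hab
    have hab2 : a.2 + b.2 = 0 := congrArg Prod.snd hab
    have hb2 : b.2 = 0 := by rw [ha2, zero_add] at hab2; exact hab2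
    refine Set.mem_add.mpr ⟨a.1, ha1, b.1, ?_, hab1⟩
    -- show b.1 ∈ regNormalCone (svDom K) zb
    intro d hd
    rcases eq_or_ne d 0 with rfl | hd0
    · simp
    -- normalize d
    set d' : EuclideanSpace ℝ (Fin n) := ‖d‖⁻¹ • d with hd'def
    have hnd : (0:ℝ) < ‖d‖ := norm_pos_iff.mpr hd0
    have hd' : d' ∈ bouligandTangentCone (svDom K) zb :=
      bouligandTangentCone_smul hd (by positivity)
    have hnd' : ‖d'‖ = 1 := by
      rw [hd'def, norm_smul, norm_inv, norm_norm, inv_mul_cancel₀ (ne_of_gt hnd)]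
    obtain ⟨κ, hκ, lb, t, ds, ls, ht, ht0, hds, hls, hprop⟩ := hicf d' hd' hnd'
    -- identify lb = lamb using closedness of the graph and the singleton image
    have hlb : lb = lamb := by
      have hz : Tendsto (fun k => zb + t k • ds k) atTop (𝓝 zb) := by
        have : Tendsto (fun k => t k • ds k) atTop (𝓝 ((0:ℝ) • d')) := ht0.smul hds
        simpa using tendsto_const_nhds.add this
      have hmem : ∀ k, ((zb + t k • ds k, ls k) : _ × _) ∈ svGraph K :=
        fun k => (hprop k).1
      have hlim : Tendsto (fun k => ((zb + t k • ds k, ls k) : _ × _)) atTop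
          (𝓝 (zb, lb)) := hz.prodMk_nhds hls
      have : ((zb, lb) : _ × _) ∈ svGraph K :=
        hgph.mem_of_tendsto hlim (Eventually.of_forall hmem)
      have : lb ∈ K zb := this
      rw [hsingle] at this
      exact this
    -- the difference quotients are bounded
    set u : ℕ → EuclideanSpace ℝ (Fin m) := fun k => (t k)⁻¹ • (ls k - lamb) with hudef
    obtain ⟨C, hC⟩ : ∃ C, ∀ k, ‖ds k‖ ≤ C := by
      obtain ⟨C, hC⟩ := hds.norm.bddAbove_range
      exact ⟨C, fun k => hC (Set.mem_range_self k)⟩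
    have hubdd : ∀ k, u k ∈ Metric.closedBall (0 : EuclideanSpace ℝ (Fin m)) (κ * C) := by
      intro k
      rw [Metric.mem_closedBall, dist_zero_right, hudef]
      have htk := ht k
      have h1 : ‖(t k)⁻¹ • (ls k - lamb)‖ = (t k)⁻¹ * ‖ls k - lamb‖ := by
        rw [norm_smul, Real.norm_eq_abs, abs_of_pos (by positivity)]
      rw [h1]
      have h2 : ‖ls k - lamb‖ ≤ κ * t k * ‖ds k‖ := hlb ▸ (hprop k).2
      calc (t k)⁻¹ * ‖ls k - lamb‖ ≤ (t k)⁻¹ * (κ * t k * ‖ds k‖) := by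
            exact mul_le_mul_of_nonneg_left h2 (by positivity)
        _ = κ * ‖ds k‖ := by field_simp
        _ ≤ κ * C := mul_le_mul_of_nonneg_left (hC k) (le_of_lt hκ)
    obtain ⟨q, -, φ, hφ, hqlim⟩ :=
      tendsto_subseq_of_bounded Metric.isBounded_closedBall hubdd
    -- (d', q) is tangent to the graph at (zb, lamb)
    have htan : ((d', q) : _ × _) ∈ bouligandTangentCone (svGraph K) (zb, lamb) := by
      refine ⟨fun k => t (φ k), fun k => (ds (φ k), u (φ k)), fun k => ht _, ?_, ?_, fun k => ?_⟩
      · exact ht0.comp hφ.tendsto_atTop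
      · exact (hds.comp hφ.tendsto_atTop).prodMk_nhds hqlim
      · show (lamb + t (φ k) • u (φ k)) ∈ K (zb + t (φ k) • ds (φ k))
        have : lamb + t (φ k) • u (φ k) = ls (φ k) := by
          rw [hudef, smul_smul, mul_inv_cancel₀ (ne_of_gt (ht (φ k))), one_smul]
          abel
        rw [this]
        exact (hprop (φ k)).1
    have hbd' : ⟪b.1, d'⟫ ≤ 0 := by
      have := hb (d', q) htan
      simpa [hb2] using this
    have : ⟪b.1, d⟫ = ‖d‖ * ⟪b.1, d'⟫ := by
      rw [hd'def, real_inner_smul_right]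
      field_simp
    rw [this]
    exact mul_nonpos_of_nonneg_of_nonpos (le_of_lt hnd) hbd'
  · -- easy direction
    rintro ζ ⟨ζ1, h1, ζ2, h2, rfl⟩
    intro w hw
    have hw1 : w ∈ bouligandTangentCone M zb :=
      bouligandTangentCone_mono_s15 inter_subset_left zb hw
    have hw2 : w ∈ bouligandTangentCone (svDom K) zb :=
      bouligandTangentCone_mono_s15 inter_subset_right zb hw
    have := add_le_add (h1 w hw1) (h2 w hw2)
    simpa [inner_add_left] using this
end
end

section
/- Consider the closed set Γ := {(z, λ) ∈ ℝ × ℝ | z ≥ 0 ∧ λ² ≤ z} (the graph of the mapping K(z) = [−√z, √z] for z ≥ 0, K(z) = ∅ for z < 0) and the set M := (−∞, 0]. Then: (i) the Bouligand tangent cone of Γ at (0, 0) equals [0, ∞) × ℝ; (ii) (M × ℝ) ∩ Γ = {(0, 0)}, so T_{(M × ℝ) ∩ Γ}(0, 0) = {(0, 0)}; (iii) T_{M × ℝ}(0, 0) ∩ T_Γ(0, 0) = {0} × ℝ; in particular, the tangent cone intersection rule fails at (0, 0), i.e., T_{(M × ℝ) ∩ Γ}(0, 0) is a proper subset of T_{M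 × ℝ}(0, 0) ∩ T_Γ(0, 0). -/
open Filter Metric Set Bornology
open scoped RealInnerProductSpace Topology Pointwise

noncomputable section

/-!
`M × ℝ` lies in the half-plane `z ≤ 0` and `Γ` in `z ≥ 0`, so their tangent cones lie in the
same half-planes and meet in the `λ`-axis, which both cones do contain. The sets themselves,
however, meet only at the origin, since `λ² ≤ z ≤ 0` forces `λ = 0`, and the tangent cone of a
point is `{0}`.
-/

section BouligandTangentCone

variable {E : Type*} [NormedAddCommGroup E] [NormedSpace ℝ E]

theorem mem_bouligandTangentCone_of_tendsto {Ω : Set E} {x w : E} (v : ℝ → E)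
    (hv : Tendsto v (𝓝[>] 0) (𝓝 w)) (hmem : ∀ t > 0, x + t • v t ∈ Ω) :
    w ∈ bouligandTangentCone Ω x := by
  have hpos : ∀ k : ℕ, (0 : ℝ) < 1 / ((k : ℝ) + 1) := fun k => by positivity
  have ht : Tendsto (fun k : ℕ => 1 / ((k : ℝ) + 1)) atTop (𝓝[>] 0) :=
    tendsto_nhdsWithin_iff.2
      ⟨tendsto_one_div_add_atTop_nhds_zero_nat, Eventually.of_forall hpos⟩
  exact ⟨_, _, hpos, tendsto_one_div_add_atTop_nhds_zero_nat, hv.comp ht,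
    fun k => hmem _ (hpos k)⟩

theorem nonneg_of_mem_bouligandTangentCone {Ω : Set E} {x w : E} (ℓ : E →L[ℝ] ℝ)
    (hΩ : ∀ p ∈ Ω, ℓ x ≤ ℓ p) (hw : w ∈ bouligandTangentCone Ω x) : 0 ≤ ℓ w := by
  obtain ⟨t, v, ht, -, hv, hmem⟩ := hw
  have hℓv : ∀ k, 0 ≤ ℓ (v k) := fun k => by
    have := hΩ _ (hmem k)
    rw [map_add, map_smul, smul_eq_mul] at this
    exact nonneg_of_mul_nonneg_right (by linarith) (ht k)
  exact ge_of_tendsto' ((ℓ.continuous.tendsto w).comp hv) hℓv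

theorem bouligandTangentCone_singleton (x : E) :
    bouligandTangentCone {x} x = {0} := by
  ext w
  constructor
  · rintro ⟨t, v, ht, -, hv, hmem⟩
    have hv0 : v = fun _ => 0 := funext fun k => by
      simpa [(ht k).ne'] using hmem k
    rw [hv0] at hv
    exact tendsto_nhds_unique hv tendsto_const_nhds
  · rintro rfl
    exact mem_bouligandTangentCone_of_tendsto (fun _ => 0) tendsto_const_nhds (by simp)

end BouligandTangentCone

theorem bouligandTangentCone_parabolicGraph :
    bouligandTangentCone {p : ℝ × ℝ | 0 ≤ p.1 ∧ p.2 ^ 2 ≤ p.1} (0, 0) = Ici 0 ×ˢ univ := by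
  ext ⟨a, b⟩
  simp only [mem_prod, mem_Ici, mem_univ, and_true]
  refine ⟨fun hw => by
    simpa using nonneg_of_mem_bouligandTangentCone (.fst ℝ ℝ ℝ) (fun p hp => hp.1) hw,
    fun ha => ?_⟩
  -- The correction `t b²` keeps the curve in `Γ` also when `a = 0`.
  refine mem_bouligandTangentCone_of_tendsto (fun t => (a + t * b ^ 2, b)) ?_ fun t ht => ?_
  · have : Tendsto (fun t : ℝ => a + t * b ^ 2) (𝓝[>] 0) (𝓝 a) := by
      simpa using (tendsto_const_nhds.add (tendsto_id.mul_const (b ^ 2))).mono_left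
        (nhdsWithin_le_nhds (a := (0 : ℝ)))
    exact this.prodMk_nhds tendsto_const_nhds
  · simp only [mem_ofPred_eq, Prod.fst_add, Prod.snd_add, Prod.smul_mk, smul_eq_mul, zero_add]
    constructor <;> nlinarith [mul_nonneg ht.le ha, sq_nonneg (t * b)]

theorem Iic_prod_univ_inter_parabolicGraph :
    (Iic (0 : ℝ) ×ˢ univ) ∩ {p : ℝ × ℝ | 0 ≤ p.1 ∧ p.2 ^ 2 ≤ p.1} = {(0, 0)} := by
  ext ⟨z, l⟩
  simp only [mem_inter_iff, mem_prod, mem_Iic, mem_univ, and_true, mem_ofPred_eq,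
    mem_singleton_iff, Prod.mk.injEq]
  constructor
  · rintro ⟨hz, hz', hl⟩
    exact ⟨by linarith, by nlinarith⟩
  · rintro ⟨rfl, rfl⟩
    norm_num

theorem bouligandTangentCone_Iic_prod_univ_inter_parabolicGraph :
    bouligandTangentCone (Iic (0 : ℝ) ×ˢ univ) (0, 0)
        ∩ bouligandTangentCone {p : ℝ × ℝ | 0 ≤ p.1 ∧ p.2 ^ 2 ≤ p.1} (0, 0)
      = ({0} : Set ℝ) ×ˢ univ := by
  rw [bouligandTangentCone_parabolicGraph]
  ext ⟨a, b⟩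
  simp only [mem_inter_iff, mem_prod, mem_singleton_iff, mem_Ici, mem_univ, and_true]
  constructor
  · rintro ⟨hM, ha⟩
    have := nonneg_of_mem_bouligandTangentCone (-.fst ℝ ℝ ℝ) (fun p hp => by simpa using hp.1) hM
    simp only [neg_apply, ContinuousLinearMap.coe_fst', neg_nonneg] at this
    linarith
  · rintro rfl
    exact ⟨mem_bouligandTangentCone_of_tendsto (fun _ => (0, b)) tendsto_const_nhds
      (by simp), le_rfl⟩

/-- Failure of the tangent cone intersection rule for `M = (-∞, 0]` and the graph
`Γ = {(z, λ) | z ≥ 0, λ² ≤ z}` at `(0, 0)`. -/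
theorem stmt_17 :
    ∀ (Γ : Set (ℝ × ℝ)) (M : Set ℝ),
      Γ = {p | 0 ≤ p.1 ∧ p.2 ^ 2 ≤ p.1} →
      M = Set.Iic (0 : ℝ) →
      bouligandTangentCone Γ ((0 : ℝ), (0 : ℝ)) = Set.Ici (0 : ℝ) ×ˢ (univ : Set ℝ) ∧
      (M ×ˢ (univ : Set ℝ)) ∩ Γ = {((0 : ℝ), (0 : ℝ))} ∧
      bouligandTangentCone ((M ×ˢ (univ : Set ℝ)) ∩ Γ) ((0 : ℝ), (0 : ℝ))
        = {((0 : ℝ), (0 : ℝ))} ∧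
      bouligandTangentCone (M ×ˢ (univ : Set ℝ)) ((0 : ℝ), (0 : ℝ))
          ∩ bouligandTangentCone Γ ((0 : ℝ), (0 : ℝ))
        = ({0} : Set ℝ) ×ˢ (univ : Set ℝ) ∧
      bouligandTangentCone ((M ×ˢ (univ : Set ℝ)) ∩ Γ) ((0 : ℝ), (0 : ℝ))
        ⊂ bouligandTangentCone (M ×ˢ (univ : Set ℝ)) ((0 : ℝ), (0 : ℝ))
            ∩ bouligandTangentCone Γ ((0 : ℝ), (0 : ℝ)) := by
  rintro Γ M rfl rfl
  have hInter := bouligandTangentCone_Iic_prod_univ_inter_parabolicGraph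
  have hCone : bouligandTangentCone ((Iic (0 : ℝ) ×ˢ univ) ∩
      {p : ℝ × ℝ | 0 ≤ p.1 ∧ p.2 ^ 2 ≤ p.1}) (0, 0) = {(0, 0)} := by
    rw [Iic_prod_univ_inter_parabolicGraph, ← Prod.zero_eq_mk, bouligandTangentCone_singleton]
  refine ⟨bouligandTangentCone_parabolicGraph, Iic_prod_univ_inter_parabolicGraph, hCone,
    hInter, ?_⟩
  rw [hCone, hInter, ssubset_iff_of_subset (by simp)]
  exact ⟨(0, 1), by simp, by simp⟩
end
end

section
/- Let n ∈ ℕ, κ ∈ {1, …, n−1}, and for z ∈ ℝ^n set K_cc(z) := {λ ∈ ℝ^n | Σ_i λ_i ≥ n − κ, 0 ≤ λ_i ≤ 1 for all i, z_i λ_i = 0 for all i}. If K_cc(z) is nonempty, then K_cc(z) is a singleton if and only if the number of indices i with z_i ≠ 0 equals κ; moreover, K_cc(z) is nonempty if and only if the number of indices i with z_i ≠ 0 is at most κ. -/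
/-!
Every `λ ∈ K_cc(z)` lies pointwise below the indicator `e` of the zero set of `z`, and
`∑ e = n - ‖z‖₀`; hence `K_cc(z)` is nonempty iff `e ∈ K_cc(z)` iff `‖z‖₀ ≤ κ`.
If `‖z‖₀ = κ`, the constraint `∑ λ ≥ n - κ = ∑ e` forces `λ = e`. If `‖z‖₀ < κ ≤ n`,
then `z` has a zero entry, and setting `e` to `0` there gives a second element of `K_cc(z)`.
-/

open Filter Metric Set Bornology
open scoped RealInnerProductSpace Topology Pointwise

noncomputable section

section CardinalityConstraint

variable {ι : Type*} [Fintype ι]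

/-- `K_cc z` for the cardinality constraint `‖z‖₀ ≤ κ`. -/
def ccMultiplierSet (z : ι → ℝ) (κ : ℕ) : Set (ι → ℝ) :=
  {lam | ((Fintype.card ι : ℝ) - κ) ≤ ∑ i, lam i ∧
    (∀ i, 0 ≤ lam i ∧ lam i ≤ 1) ∧ ∀ i, z i * lam i = 0}

def zeroIndicator (z : ι → ℝ) : ι → ℝ := fun i => if z i = 0 then 1 else 0

theorem le_zeroIndicator_of_mem_ccMultiplierSet {z : ι → ℝ} {κ : ℕ} {lam : ι → ℝ}
    (h : lam ∈ ccMultiplierSet z κ) (i : ι) : lam i ≤ zeroIndicator z i := by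
  by_cases hzi : z i = 0
  · simpa [zeroIndicator, hzi] using (h.2.1 i).2
  · simp [zeroIndicator, hzi, (mul_eq_zero.1 (h.2.2 i)).resolve_left hzi]

theorem sum_zeroIndicator (z : ι → ℝ) :
    ∑ i, zeroIndicator z i = (Fintype.card ι : ℝ) - {i | z i ≠ 0}.ncard := by
  have hcompl := Set.ncard_add_ncard_compl {i | z i = 0}
  rw [Set.compl_ofPred, Nat.card_eq_fintype_card] at hcompl
  rw [eq_sub_iff_add_eq, ← hcompl, Nat.cast_add]
  simp [zeroIndicator, Finset.sum_boole, Set.ncard_eq_toFinset_card']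

variable {z : ι → ℝ} {κ : ℕ}

theorem ncard_support_le_of_mem_ccMultiplierSet {lam : ι → ℝ}
    (h : lam ∈ ccMultiplierSet z κ) : {i | z i ≠ 0}.ncard ≤ κ := by
  have hsum : ∑ i, lam i ≤ ∑ i, zeroIndicator z i :=
    Finset.sum_le_sum fun i _ => le_zeroIndicator_of_mem_ccMultiplierSet h i
  rw [sum_zeroIndicator] at hsum
  exact_mod_cast (show ({i | z i ≠ 0}.ncard : ℝ) ≤ κ by linarith [h.1])

theorem zeroIndicator_mem_ccMultiplierSet (hz : {i | z i ≠ 0}.ncard ≤ κ) :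
    zeroIndicator z ∈ ccMultiplierSet z κ := by
  refine ⟨?_, fun i => ?_, fun i => ?_⟩
  · rw [sum_zeroIndicator]
    linarith [(Nat.cast_le (α := ℝ)).2 hz]
  all_goals by_cases hzi : z i = 0 <;> simp [zeroIndicator, hzi]

theorem ccMultiplierSet_nonempty_iff :
    (ccMultiplierSet z κ).Nonempty ↔ {i | z i ≠ 0}.ncard ≤ κ :=
  ⟨fun ⟨_, h⟩ => ncard_support_le_of_mem_ccMultiplierSet h,
    fun hz => ⟨_, zeroIndicator_mem_ccMultiplierSet hz⟩⟩

theorem ccMultiplierSet_eq_singleton (hz : {i | z i ≠ 0}.ncard = κ) :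
    ccMultiplierSet z κ = {zeroIndicator z} := by
  refine Set.eq_singleton_iff_unique_mem.2 ⟨zeroIndicator_mem_ccMultiplierSet hz.le, ?_⟩
  intro lam h
  have hle := le_zeroIndicator_of_mem_ccMultiplierSet h
  have hsum : ∑ i, zeroIndicator z i ≤ ∑ i, lam i := by
    rw [sum_zeroIndicator, hz]
    exact h.1
  funext i
  exact (Finset.sum_eq_sum_iff_of_le fun i _ => hle i).1
    (le_antisymm (Finset.sum_le_sum fun i _ => hle i) hsum) i (Finset.mem_univ i)

theorem update_zeroIndicator_mem_ccMultiplierSet [DecidableEq ι]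
    (hz : {i | z i ≠ 0}.ncard < κ) {j : ι} (hj : z j = 0) :
    Function.update (zeroIndicator z) j 0 ∈ ccMultiplierSet z κ := by
  have hmem := zeroIndicator_mem_ccMultiplierSet hz.le
  refine ⟨?_, fun i => ?_, fun i => ?_⟩
  · rw [Finset.sum_update_of_mem (Finset.mem_univ j), Finset.sdiff_singleton_eq_erase,
      Finset.sum_erase_eq_sub (Finset.mem_univ j), sum_zeroIndicator]
    have : ({i | z i ≠ 0}.ncard : ℝ) + 1 ≤ κ := by exact_mod_cast hz
    simp only [zeroIndicator, hj, if_true]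
    linarith
  · rcases eq_or_ne i j with rfl | hij
    · simp
    · rw [Function.update_of_ne hij]
      exact hmem.2.1 i
  · rcases eq_or_ne i j with rfl | hij
    · simp
    · rw [Function.update_of_ne hij]
      exact hmem.2.2 i

theorem exists_ccMultiplierSet_eq_singleton_iff (hκ : κ ≤ Fintype.card ι)
    (hne : (ccMultiplierSet z κ).Nonempty) :
    (∃ lam, ccMultiplierSet z κ = {lam}) ↔ {i | z i ≠ 0}.ncard = κ := by
  classical
  refine ⟨fun ⟨lam, hlam⟩ => ?_, fun hz => ⟨_, ccMultiplierSet_eq_singleton hz⟩⟩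
  refine (ccMultiplierSet_nonempty_iff.1 hne).eq_of_not_lt fun hlt => ?_
  obtain ⟨j, hj⟩ : ∃ j, z j = 0 := by
    by_contra! hall
    have : {i | z i ≠ 0} = Set.univ := Set.eq_univ_of_forall hall
    rw [this, Set.ncard_univ, Nat.card_eq_fintype_card] at hlt
    omega
  have h₁ := zeroIndicator_mem_ccMultiplierSet hlt.le
  have h₂ := update_zeroIndicator_mem_ccMultiplierSet hlt hj
  rw [hlam, Set.mem_singleton_iff] at h₁ h₂
  have := congrFun (h₁.trans h₂.symm) j
  simp [zeroIndicator, hj] at this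

end CardinalityConstraint

theorem stmt_19_general {n : ℕ} (κ : ℕ) (hκ2 : κ ≤ n - 1) (z : Fin n → ℝ) :
    ∀ Kcc : Set (Fin n → ℝ),
      Kcc = {lam | ((n : ℝ) - κ) ≤ ∑ i, lam i ∧
        (∀ i, 0 ≤ lam i ∧ lam i ≤ 1) ∧ ∀ i, z i * lam i = 0} →
      (Kcc.Nonempty → ((∃ lam, Kcc = {lam}) ↔ {i | z i ≠ 0}.ncard = κ)) ∧
      (Kcc.Nonempty ↔ {i | z i ≠ 0}.ncard ≤ κ) := by
  intro Kcc hK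
  have hKcc : Kcc = ccMultiplierSet z κ := by simp [hK, ccMultiplierSet]
  subst hKcc
  exact ⟨exists_ccMultiplierSet_eq_singleton_iff (by rw [Fintype.card_fin]; omega),
    ccMultiplierSet_nonempty_iff⟩

/-- For the mapping `K_cc` of the complementarity-type reformulation of the cardinality
constraint: `K_cc z` is a singleton (given it is nonempty) iff `‖z‖₀ = κ`, and `K_cc z`
is nonempty iff `‖z‖₀ ≤ κ`. -/
theorem stmt_19 {n : ℕ} (κ : ℕ) (hκ1 : 1 ≤ κ) (hκ2 : κ ≤ n - 1) (z : Fin n → ℝ) :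
    ∀ Kcc : Set (Fin n → ℝ),
      Kcc = {lam | ((n : ℝ) - κ) ≤ ∑ i, lam i ∧
        (∀ i, 0 ≤ lam i ∧ lam i ≤ 1) ∧ ∀ i, z i * lam i = 0} →
      (Kcc.Nonempty → ((∃ lam, Kcc = {lam}) ↔ {i | z i ≠ 0}.ncard = κ)) ∧
      (Kcc.Nonempty ↔ {i | z i ≠ 0}.ncard ≤ κ) :=
  stmt_19_general κ hκ2 z
end
end
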